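/- Let S = conv{v₀,…,vₙ} ⊂ ℝⁿ be an n-simplex with 0 ∈ int S. Then for every q ∈ ℝⁿ there exist an index i ∈ {0,…,n} and coefficients α₀,…,αₙ ≥ 0 with αᵢ = 0 such that q = Σₖ αₖ vₖ and ‖q‖_{S°} = Σₖ αₖ, where S° = {p : ⟨p,x⟩ ≤ 1 ∀x ∈ S} and ‖q‖_{S°} = max_{p∈S°} ⟨p,q⟩ (the gauge function of S). In other words, the gauge of S is linear on each of the cones Cᵢ = cone({v₀,…,vₙ} \ {vᵢ}), and these cones cover ℝⁿ. -/

import Mathlib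

/-! Write `0 = ∑ λₖ vₖ` with all `λₖ > 0` (this is `0 ∈ int S`) and `q = ∑ βₖ vₖ`. Subtracting
the largest multiple `t λ` that keeps `β - t λ` nonnegative makes some coefficient `αᵢ` vanish.
The barycentric coordinate `cᵢ` of vertex `i` then yields a linear functional `f = 1 - cᵢ / λᵢ` that is
`1` on the facet opposite `vᵢ` and at most `1` on `S`, i.e. a point of `S°`; it attains the trivial
bound `⟨p, q⟩ = ∑ αₖ ⟨p, vₖ⟩ ≤ ∑ αₖ` valid for all `p ∈ S°`. -/

open scoped BigOperators Pointwise RealInnerProductSpace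
open MeasureTheory

noncomputable section

/-- The support-function "norm" `‖q‖_T = max_{p ∈ T} ⟨p, q⟩`. -/
def suppNorm {d : ℕ} (T : Set (EuclideanSpace ℝ (Fin d)))
    (q : EuclideanSpace ℝ (Fin d)) : ℝ :=
  sSup ((fun p : EuclideanSpace ℝ (Fin d) => ⟪p, q⟫) '' T)

/-- Cyclic successor on `Fin m`. -/
def cyc {m : ℕ} (i : Fin m) : Fin m := ⟨(i.val + 1) % m, Nat.mod_lt _ i.pos⟩

/-- The `T`-length of the closed polygonal line through `q 0, …, q (m-1)`. -/
def polyLen {d : ℕ} (T : Set (EuclideanSpace ℝ (Fin d))) {m : ℕ}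
    (q : Fin m → EuclideanSpace ℝ (Fin d)) : ℝ :=
  ∑ i : Fin m, suppNorm T (q (cyc i) - q i)

/-- `q` does not fit into a translate of the interior of `K`. -/
def NotFit {d : ℕ} (K : Set (EuclideanSpace ℝ (Fin d))) {m : ℕ}
    (q : Fin m → EuclideanSpace ℝ (Fin d)) : Prop :=
  ∀ t : EuclideanSpace ℝ (Fin d), ¬ (∀ i, q i - t ∈ interior K)

/-- `ξ_T(K)`: the infimum of `T`-lengths of closed polygonal lines not fitting into a
translate of the interior of `K`. -/
def xi {d : ℕ} (T K : Set (EuclideanSpace ℝ (Fin d))) : ℝ :=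
  sInf { L : ℝ | ∃ m : ℕ, 2 ≤ m ∧ ∃ q : Fin m → EuclideanSpace ℝ (Fin d),
    NotFit K q ∧ L = polyLen T q }

/-- A convex body: compact, convex, with nonempty interior. -/
def IsConvexBody {d : ℕ} (K : Set (EuclideanSpace ℝ (Fin d))) : Prop :=
  IsCompact K ∧ Convex ℝ K ∧ (interior K).Nonempty

/-- The polar set `S° = {p : ⟨p, q⟩ ≤ 1 ∀ q ∈ S}`. -/
def polarSet {d : ℕ} (S : Set (EuclideanSpace ℝ (Fin d))) :
    Set (EuclideanSpace ℝ (Fin d)) :=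
  { p | ∀ q ∈ S, ⟪p, q⟫ ≤ 1 }

/-- The permutohedron: the Minkowski sum of all edges of the simplex with vertices `v`. -/
def permutohedron {n : ℕ} (v : Fin (n + 1) → EuclideanSpace ℝ (Fin n)) :
    Set (EuclideanSpace ℝ (Fin n)) :=
  ∑ p ∈ Finset.univ.filter (fun p : Fin (n + 1) × Fin (n + 1) => p.1 < p.2),
    segment ℝ (v p.1) (v p.2)

end

open Set

theorem exists_nonneg_coeff_eq_zero_of_pos_sum_smul_eq_zero {ι E : Type*} [Fintype ι]
    [Nonempty ι] [AddCommGroup E] [Module ℝ E] {v : ι → E} {l : ι → ℝ} (hl : ∀ k, 0 < l k)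
    (hlv : ∑ k, l k • v k = 0) (β : ι → ℝ) :
    ∃ i, ∃ α : ι → ℝ, (∀ k, 0 ≤ α k) ∧ α i = 0 ∧ ∑ k, α k • v k = ∑ k, β k • v k := by
  obtain ⟨i, -, hi⟩ := Finset.exists_min_image Finset.univ (fun k => β k / l k) Finset.univ_nonempty
  refine ⟨i, fun k => β k - β i / l i * l k, fun k => ?_, ?_, ?_⟩
  · have := hi k (Finset.mem_univ k)
    rw [le_div_iff₀ (hl k)] at this
    simpa using this
  · simp [div_mul_cancel₀ _ (hl i).ne']
  · simp only [sub_smul, Finset.sum_sub_distrib, mul_smul, ← Finset.smul_sum, hlv, smul_zero,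
      sub_zero]

theorem AffineBasis.exists_linearMap_le_one_eq_one_of_ne {ι E : Type*} [AddCommGroup E]
    [Module ℝ E] (b : AffineBasis ι ℝ E) {i : ι} (hi : 0 < b.coord i 0) :
    ∃ f : E →ₗ[ℝ] ℝ, (∀ k, f (b k) ≤ 1) ∧ ∀ k ≠ i, f (b k) = 1 := by
  have hf : ∀ x, (-(b.coord i 0)⁻¹ • (b.coord i).linear) x = 1 - b.coord i x / b.coord i 0 := by
    intro x
    have := (b.coord i).linearMap_vsub x 0
    simp only [vsub_eq_sub, sub_zero] at this
    simp only [LinearMap.smul_apply, this, smul_eq_mul]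
    field_simp
    ring
  refine ⟨-(b.coord i 0)⁻¹ • (b.coord i).linear, fun k => ?_, fun k hk => ?_⟩ <;> rw [hf]
  · obtain rfl | hk := eq_or_ne k i
    · simp [b.coord_apply_eq, hi.le]
    · simp [b.coord_apply_ne hk.symm]
  · rw [b.coord_apply_ne hk.symm, zero_div, sub_zero]

theorem polarSet_convexHull {d : ℕ} (s : Set (EuclideanSpace ℝ (Fin d))) :
    polarSet (convexHull ℝ s) = polarSet s := by
  refine Subset.antisymm (fun p hp x hx => hp x (subset_convexHull ℝ s hx)) fun p hp => ?_
  have hconv : Convex ℝ {x | ⟪p, x⟫ ≤ 1} := convex_halfSpace_le (innerₛₗ ℝ p).isLinear 1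
  exact fun x hx => convexHull_min hp hconv hx

theorem suppNorm_polarSet_convexHull_range_sum_smul {d : ℕ} {ι : Type*} [Fintype ι]
    {v : ι → EuclideanSpace ℝ (Fin d)} {α : ι → ℝ} (hα : ∀ k, 0 ≤ α k)
    {p : EuclideanSpace ℝ (Fin d)} (hp : ∀ k, ⟪p, v k⟫ ≤ 1) (hpα : ∀ k, α k ≠ 0 → ⟪p, v k⟫ = 1) :
    suppNorm (polarSet (convexHull ℝ (range v))) (∑ k, α k • v k) = ∑ k, α k := by
  refine IsGreatest.csSup_eq ⟨⟨p, ?_, ?_⟩, ?_⟩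
  · rw [polarSet_convexHull]
    rintro _ ⟨k, rfl⟩
    exact hp k
  · simp only [inner_sum, real_inner_smul_right]
    refine Finset.sum_congr rfl fun k _ => ?_
    by_cases hk : α k = 0
    · simp [hk]
    · rw [hpα k hk, mul_one]
  · rintro _ ⟨w, hw, rfl⟩
    rw [polarSet_convexHull] at hw
    simp only [inner_sum, real_inner_smul_right]
    exact Finset.sum_le_sum fun k _ => mul_le_of_le_one_right (hα k) (hw _ ⟨k, rfl⟩)

theorem gauge_linear_on_cones_general (n : ℕ)
    (v : Fin (n + 1) → EuclideanSpace ℝ (Fin n)) (hv : AffineIndependent ℝ v)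
    (h0 : (0 : EuclideanSpace ℝ (Fin n)) ∈ interior (convexHull ℝ (Set.range v)))
    (q : EuclideanSpace ℝ (Fin n)) :
    ∃ i : Fin (n + 1), ∃ α : Fin (n + 1) → ℝ, (∀ k, 0 ≤ α k) ∧ α i = 0 ∧
      q = ∑ k, α k • v k ∧
      suppNorm (polarSet (convexHull ℝ (Set.range v))) q = ∑ k, α k := by
  have hspan : affineSpan ℝ (range v) = ⊤ :=
    interior_convexHull_nonempty_iff_affineSpan_eq_top.1 ⟨0, h0⟩
  let b : AffineBasis (Fin (n + 1)) ℝ (EuclideanSpace ℝ (Fin n)) := ⟨v, hv, hspan⟩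
  have hpos : ∀ k, 0 < b.coord k 0 := by
    have h0' : (0 : EuclideanSpace ℝ (Fin n)) ∈ interior (convexHull ℝ (range b)) := h0
    rwa [b.interior_convexHull] at h0'
  obtain ⟨i, α, hα, hαi, hq⟩ := exists_nonneg_coeff_eq_zero_of_pos_sum_smul_eq_zero hpos
    (b.linear_combination_coord_eq_self 0) (fun k => b.coord k q)
  rw [b.linear_combination_coord_eq_self q] at hq
  obtain ⟨f, hf_le, hf_eq⟩ := b.exists_linearMap_le_one_eq_one_of_ne (hpos i)
  let p := (InnerProductSpace.toDual ℝ (EuclideanSpace ℝ (Fin n))).symm f.toContinuousLinearMap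
  have hp : ∀ x, ⟪p, x⟫ = f x := fun x => by simp [p]
  refine ⟨i, α, hα, hαi, hq.symm, hq ▸ suppNorm_polarSet_convexHull_range_sum_smul hα
    (fun k => (hp _).trans_le (hf_le k)) fun k hk => (hp _).trans (hf_eq k ?_)⟩
  rintro rfl
  exact hk hαi

/-- the gauge `‖·‖_{S°}` of a simplex `S = conv{v₀,…,vₙ}` with `0 ∈ int S`
is linear on each cone `Cᵢ = cone({v₀,…,vₙ} \ {vᵢ})`, and these cones cover `ℝⁿ`:
every `q` is a nonnegative combination of the `vₖ` with some `αᵢ = 0` and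
`‖q‖_{S°} = Σₖ αₖ`. -/
theorem gauge_linear_on_cones (n : ℕ) (hn : 1 ≤ n)
    (v : Fin (n + 1) → EuclideanSpace ℝ (Fin n)) (hv : AffineIndependent ℝ v)
    (h0 : (0 : EuclideanSpace ℝ (Fin n)) ∈ interior (convexHull ℝ (Set.range v)))
    (q : EuclideanSpace ℝ (Fin n)) :
    ∃ i : Fin (n + 1), ∃ α : Fin (n + 1) → ℝ, (∀ k, 0 ≤ α k) ∧ α i = 0 ∧
      q = ∑ k, α k • v k ∧
      suppNorm (polarSet (convexHull ℝ (Set.range v))) q = ∑ k, α k :=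
  gauge_linear_on_cones_general n v hv h0 q
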